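/- arXiv:1711.02301 — 5 statements merged into one kernel-verified Lean document; each statement's English description precedes it below -/
import Mathlib

section
/- In an Attacker-Defender game with K levels where all N pieces start at level 0, if N < 2^K then the defender can always win. Formally: if the defender always destroys a set containing at least half of the remaining pieces, then after j rounds at most N/2^j pieces remain, and since any surviving piece has advanced at most j levels, no piece ever reaches level K. -/
open Finset

/-- Potential of a state `S` (counts of pieces per level) in a game with `K` levels. -/
noncomputable def phi (K : ℕ) (S : ℕ → ℕ) : ℝ :=
  ∑ i ∈ Finset.range (K+1), (S i : ℝ) * (2:ℝ) ^ (-((K:ℤ) - i))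

/-- Advance every piece one level. -/
def advance (S : ℕ → ℕ) : ℕ → ℕ := fun i => if i = 0 then 0 else S (i-1)

/-- The attacker can force a win from state `S`: either a piece is already at level `K`,
or the attacker can present a partition `A, B` such that whichever part the defender
destroys, the attacker wins from the advanced surviving part. -/
inductive AttackerWins (K : ℕ) : (ℕ → ℕ) → Prop where
  | reach (S : ℕ → ℕ) : S K ≠ 0 → AttackerWins K S
  | step (S A B : ℕ → ℕ) : (∀ i, A i + B i = S i) →
      AttackerWins K (advance A) → AttackerWins K (advance B) → AttackerWins K S

/-- The defender can force a win from state `S`: either no pieces remain, or no piece is at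
level `K` and for every partition `A, B` the attacker presents, the defender can destroy one
part so that the defender wins from the advanced other part. -/
inductive DefenderWins (K : ℕ) : (ℕ → ℕ) → Prop where
  | empty (S : ℕ → ℕ) : (∀ i, S i = 0) → DefenderWins K S
  | step (S : ℕ → ℕ) (choice : (ℕ → ℕ) → (ℕ → ℕ) → Bool) : S K = 0 →
      (∀ A B : ℕ → ℕ, (∀ i, A i + B i = S i) →
        DefenderWins K (advance (if choice A B then A else B))) → DefenderWins K S

lemma phi_nonneg (K : ℕ) (S : ℕ → ℕ) : 0 ≤ phi K S := by
  apply Finset.sum_nonneg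
  intro i _
  positivity

lemma phi_add (K : ℕ) (A B S : ℕ → ℕ) (h : ∀ i, A i + B i = S i) :
    phi K A + phi K B = phi K S := by
  unfold phi
  rw [← Finset.sum_add_distrib]
  refine Finset.sum_congr rfl fun i _ => ?_
  rw [← add_mul, ← h i]
  push_cast
  ring

lemma phi_advance_le (K : ℕ) (C : ℕ → ℕ) : phi K (advance C) ≤ 2 * phi K C := by
  unfold phi advance
  rw [Finset.sum_range_succ']
  simp only [Nat.succ_ne_zero, if_false, Nat.add_sub_cancel, if_true, Nat.cast_zero,
    zero_mul, add_zero]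
  have h1 : ∀ i ∈ Finset.range K,
      (C i : ℝ) * (2:ℝ) ^ (-((K:ℤ) - ((i+1 : ℕ) : ℤ))) = 2 * ((C i : ℝ) * (2:ℝ) ^ (-((K:ℤ) - i))) := by
    intro i _
    have : (-((K:ℤ) - ((i+1 : ℕ) : ℤ))) = (-((K:ℤ) - i)) + 1 := by push_cast; ring
    rw [this, zpow_add₀ (by norm_num : (2:ℝ) ≠ 0)]
    ring
  rw [Finset.sum_congr rfl h1, ← Finset.mul_sum]
  have h2 : ∑ i ∈ Finset.range K, (C i : ℝ) * (2:ℝ) ^ (-((K:ℤ) - i)) ≤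
      ∑ i ∈ Finset.range (K+1), (C i : ℝ) * (2:ℝ) ^ (-((K:ℤ) - i)) := by
    apply Finset.sum_le_sum_of_subset_of_nonneg
    · exact Finset.range_subset_range.mpr (Nat.le_succ K)
    · intro i _ _; positivity
  linarith

lemma cast_le_phi (K : ℕ) (S : ℕ → ℕ) : (S K : ℝ) ≤ phi K S := by
  have h := Finset.single_le_sum (f := fun i => (S i : ℝ) * (2:ℝ) ^ (-((K:ℤ) - i)))
    (fun i _ => by positivity) (Finset.self_mem_range_succ K)
  simpa [phi] using h

lemma SK_eq_zero (K : ℕ) (S : ℕ → ℕ) (h : phi K S < 1) : S K = 0 := by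
  by_contra hne
  have h1 : (1 : ℝ) ≤ (S K : ℝ) := by exact_mod_cast Nat.one_le_iff_ne_zero.mpr hne
  have := cast_le_phi K S
  linarith

lemma phi_zero_imp (K : ℕ) (S : ℕ → ℕ) (h : phi K S ≤ 0) :
    ∀ i ∈ Finset.range (K+1), S i = 0 := by
  have heq : phi K S = 0 := le_antisymm h (phi_nonneg K S)
  intro i hi
  have := (Finset.sum_eq_zero_iff_of_nonneg (fun j _ => by positivity)).mp heq i hi
  have hw : (0:ℝ) < (2:ℝ) ^ (-((K:ℤ) - i)) := by positivity
  have : (S i : ℝ) = 0 := by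
    rcases mul_eq_zero.mp this with h' | h'
    · exact h'
    · exact absurd h' (ne_of_gt hw)
  exact_mod_cast this

lemma main_aux (K : ℕ) : ∀ n (S : ℕ → ℕ), (∑ i ∈ Finset.range (K+1), S i) ≤ n →
    phi K S < 1 → (∀ i, K < i → S i = 0) → DefenderWins K S := by
  intro n
  induction n with
  | zero =>
    intro S hm _ hhi
    refine DefenderWins.empty S fun i => ?_
    by_cases h : i ≤ K
    · have : ∑ j ∈ Finset.range (K+1), S j = 0 := Nat.le_zero.mp hm
      exact (Finset.sum_eq_zero_iff.mp this) i (Finset.mem_range.mpr (Nat.lt_succ_of_le h))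
    · exact hhi i (Nat.lt_of_not_le h)
  | succ n ih =>
    intro S hm hφ hhi
    have hSK : S K = 0 := SK_eq_zero K S hφ
    refine DefenderWins.step S
      (fun A B => @decide (phi K A ≤ phi K B) (Classical.propDecidable _)) hSK ?_
    intro A B hAB
    -- unify the two cases: the kept part C has phi ≤ the discarded part D
    have key : ∀ C D : ℕ → ℕ, (∀ i, C i + D i = S i) → phi K C ≤ phi K D →
        DefenderWins K (advance C) := by
      intro C D hCD hle
      have hsum := phi_add K C D S hCD
      have hφC : phi K (advance C) < 1 := by
        have := phi_advance_le K C
        linarith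
      have hhiC : ∀ i, K < i → advance C i = 0 := by
        intro i hi
        have hi0 : i ≠ 0 := by omega
        simp only [advance, if_neg hi0]
        have hCi : C (i-1) + D (i-1) = S (i-1) := hCD (i-1)
        rcases Nat.lt_or_ge K (i-1) with h' | h'
        · have := hhi (i-1) h'; omega
        · have hiK : i - 1 = K := by omega
          rw [hiK] at hCi ⊢
          omega
      -- measure
      have hmS : ∑ i ∈ Finset.range (K+1), C i + ∑ i ∈ Finset.range (K+1), D i
          = ∑ i ∈ Finset.range (K+1), S i := by
        rw [← Finset.sum_add_distrib]
        exact Finset.sum_congr rfl fun i _ => hCD i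
      by_cases hD : ∑ i ∈ Finset.range (K+1), D i = 0
      · -- discarded part empty on relevant levels: kept part is all zero
        have hDz : ∀ i ∈ Finset.range (K+1), D i = 0 := Finset.sum_eq_zero_iff.mp hD
        have hφD : phi K D = 0 := by
          unfold phi
          apply Finset.sum_eq_zero
          intro i hi
          rw [hDz i hi]
          simp
        have hCz := phi_zero_imp K C (by linarith [phi_nonneg K C])
        refine DefenderWins.empty _ fun i => ?_
        by_cases hi0 : i = 0
        · simp [advance, hi0]
        · simp only [advance, if_neg hi0]
          rcases Nat.lt_or_ge K (i-1) with h' | h'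
          · have hCi : C (i-1) + D (i-1) = S (i-1) := hCD (i-1)
            have := hhi (i-1) h'; omega
          · exact hCz (i-1) (Finset.mem_range.mpr (by omega))
      · -- discarded part nonempty: piece count strictly decreases
        have hmeas : ∑ i ∈ Finset.range (K+1), advance C i ≤ n := by
          have h1 : ∑ i ∈ Finset.range (K+1), advance C i
              = ∑ i ∈ Finset.range K, C i := by
            rw [Finset.sum_range_succ']
            simp [advance]
          have h2 : ∑ i ∈ Finset.range K, C i ≤ ∑ i ∈ Finset.range (K+1), C i :=
            Finset.sum_le_sum_of_subset (Finset.range_subset_range.mpr (Nat.le_succ K))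
          omega
        exact ih (advance C) hmeas hφC hhiC
    by_cases hc : phi K A ≤ phi K B
    · have hd : (@decide (phi K A ≤ phi K B) (Classical.propDecidable _)) = true :=
        decide_eq_true hc
      simp only [hd, if_true]
      exact key A B hAB hc
    · have hd : (@decide (phi K A ≤ phi K B) (Classical.propDecidable _)) = false :=
        decide_eq_false hc
      simp only [hd, if_false]
      refine key B A (fun i => by rw [← hAB i]; ring) (le_of_not_ge hc)

/-- ESS with all `N` pieces at level 0: if `N < 2^K` the defender can always win. -/
theorem stmt0 (K N : ℕ) (hN : N < 2 ^ K) (S : ℕ → ℕ)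
    (h0 : S 0 = N) (hrest : ∀ i, i ≠ 0 → S i = 0) :
    DefenderWins K S := by
  apply main_aux K N S
  · rw [Finset.sum_eq_single 0]
    · omega
    · intro i _ hi; exact hrest i hi
    · intro h; exact absurd (Finset.mem_range.mpr (Nat.succ_pos K)) h
  · have : phi K S = (N : ℝ) * (2:ℝ) ^ (-(K:ℤ)) := by
      unfold phi
      rw [Finset.sum_eq_single 0]
      · simp [h0]
      · intro i _ hi; rw [hrest i hi]; simp
      · intro h; exact absurd (Finset.mem_range.mpr (Nat.succ_pos K)) h
    rw [this]
    have h2 : (N : ℝ) < 2 ^ K := by exact_mod_cast hN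
    have h3 : (0:ℝ) < (2:ℝ) ^ (K:ℕ) := by positivity
    rw [zpow_neg, mul_inv_lt_iff₀ (by exact_mod_cast h3)]
    · rw [one_mul]; exact_mod_cast h2
  · intro i hi
    exact hrest i (by omega)
end

section
/- In an Attacker-Defender game with K levels and initial state S_0 with potential φ(S_0) < 1, the defender has a winning strategy: by always destroying the part with larger potential, the invariant φ(S) < 1 is maintained, and since any state containing a piece at level K has potential at least 1, no piece ever reaches level K; moreover the game terminates since the total number of pieces strictly decreases whenever the destroyed part is nonempty. -/
open Finset

lemma phi_nonneg_terms (K : ℕ) (S : ℕ → ℕ) :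
    ∀ i ∈ Finset.range (K+1), 0 ≤ (S i : ℝ) * (2:ℝ) ^ (-((K:ℤ) - i)) := by
  intro i _
  positivity

lemma phi_advance (K : ℕ) (A : ℕ → ℕ) (hK : A K = 0) :
    phi K (advance A) = 2 * phi K A := by
  unfold phi
  rw [Finset.sum_range_succ' (fun i => ((advance A i : ℝ)) * (2:ℝ) ^ (-((K:ℤ) - i)))]
  rw [Finset.sum_range_succ (fun i => ((A i : ℝ)) * (2:ℝ) ^ (-((K:ℤ) - i)))]
  simp only [advance, hK, Nat.cast_zero, zero_mul, add_zero, Nat.succ_ne_zero,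
    ite_true, ite_false, Nat.add_sub_cancel]
  rw [Finset.mul_sum]
  apply Finset.sum_congr rfl
  intro i _
  have : (-((K:ℤ) - (i+1 : ℕ))) = 1 + (-((K:ℤ) - i)) := by push_cast; ring
  rw [this, zpow_add₀ (by norm_num : (2:ℝ) ≠ 0), zpow_one]
  ring

lemma phi_split (K : ℕ) (S A B : ℕ → ℕ) (hAB : ∀ i, A i + B i = S i) :
    phi K A + phi K B = phi K S := by
  unfold phi
  rw [← Finset.sum_add_distrib]
  apply Finset.sum_congr rfl
  intro i _
  rw [← hAB i]; push_cast; ring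

lemma defender_aux (K : ℕ) : ∀ n (S : ℕ → ℕ), (∀ i, K < i → S i = 0) → phi K S < 1 →
    (∑ i ∈ Finset.range (K+1), S i * (K+1-i)) ≤ n → DefenderWins K S := by
  intro n
  induction n with
  | zero =>
    intro S hsupp _ hM
    apply DefenderWins.empty
    intro i
    by_cases hi : K < i
    · exact hsupp i hi
    · have hmem : i ∈ Finset.range (K+1) := Finset.mem_range.mpr (by omega)
      have h0 := Finset.sum_eq_zero_iff.mp (Nat.le_zero.mp hM) i hmem
      rcases Nat.mul_eq_zero.mp h0 with h1 | h1 <;> omega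
  | succ n ih =>
    intro S hsupp h hM
    have hSK : S K = 0 := by
      by_contra hne
      have h1 : (1:ℝ) ≤ (S K : ℝ) * (2:ℝ) ^ (-((K:ℤ) - K)) := by
        simp only [sub_self, neg_zero, zpow_zero, mul_one]
        exact_mod_cast Nat.one_le_iff_ne_zero.mpr hne
      have h2 : (S K : ℝ) * (2:ℝ) ^ (-((K:ℤ) - K)) ≤ phi K S :=
        Finset.single_le_sum (phi_nonneg_terms K S) (Finset.mem_range.mpr (Nat.lt_succ_self K))
      linarith
    have main : ∀ X Y : ℕ → ℕ, (∀ i, X i + Y i = S i) → phi K X ≤ phi K Y →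
        DefenderWins K (advance X) := by
      intro X Y hXY hle
      have hXle : ∀ i, X i ≤ S i := fun i => (hXY i) ▸ Nat.le_add_right _ _
      have hXsupp : ∀ i, K ≤ i → X i = 0 := by
        intro i hi
        have hX := hXle i
        rcases eq_or_lt_of_le hi with heq | hlt
        · subst heq; omega
        · have := hsupp i hlt; omega
      by_cases hz : ∀ i, X i = 0
      · exact DefenderWins.empty _ (fun i => by simp [advance, hz])
      · -- apply ih to advance X
        apply ih
        · intro i hi
          simp only [advance]
          rw [if_neg (by omega : i ≠ 0)]
          exact hXsupp (i-1) (by omega)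
        · rw [phi_advance K X (hXsupp K le_rfl)]
          have hsplit := phi_split K S X Y hXY
          linarith
        · -- measure decreases
          have hshift : (∑ i ∈ Finset.range (K+1), advance X i * (K+1-i))
              = ∑ i ∈ Finset.range K, X i * (K-i) := by
            rw [Finset.sum_range_succ' (fun i => advance X i * (K+1-i))]
            simp only [advance, Nat.succ_ne_zero, ite_true, ite_false, zero_mul, add_zero,
              Nat.add_sub_cancel]
            apply Finset.sum_congr rfl
            intro i hi
            congr 1
            omega
          have hMX : (∑ i ∈ Finset.range K, X i * (K-i)) + (∑ i ∈ Finset.range K, X i)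
              = ∑ i ∈ Finset.range (K+1), X i * (K+1-i) := by
            rw [Finset.sum_range_succ (fun i => X i * (K+1-i)), hXsupp K le_rfl]
            rw [← Finset.sum_add_distrib]
            simp only [zero_mul, add_zero]
            apply Finset.sum_congr rfl
            intro i hi
            have : i < K := Finset.mem_range.mp hi
            have : K + 1 - i = (K - i) + 1 := by omega
            rw [this]; ring
          have hone : 1 ≤ ∑ i ∈ Finset.range K, X i := by
            push_neg at hz
            obtain ⟨j, hj⟩ := hz
            have hjK : j < K := by
              by_contra hc
              exact hj (hXsupp j (by omega))
            calc 1 ≤ X j := Nat.one_le_iff_ne_zero.mpr hj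
              _ ≤ _ := Finset.single_le_sum (fun i _ => Nat.zero_le _)
                    (Finset.mem_range.mpr hjK)
          have hle2 : (∑ i ∈ Finset.range (K+1), X i * (K+1-i))
              ≤ ∑ i ∈ Finset.range (K+1), S i * (K+1-i) :=
            Finset.sum_le_sum (fun i _ => Nat.mul_le_mul_right _ (hXle i))
          omega
    refine DefenderWins.step S (fun A B => decide (phi K A ≤ phi K B)) hSK ?_
    intro A B hAB
    by_cases hc : phi K A ≤ phi K B
    · rw [if_pos (decide_eq_true hc)]
      exact main A B hAB hc
    · rw [if_neg (by simpa using hc)]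
      exact main B A (fun i => by rw [add_comm]; exact hAB i) (le_of_not_ge hc)

/-- If the initial potential is below 1, the defender has a winning strategy. -/
theorem stmt3 (K : ℕ) (S : ℕ → ℕ) (hsupp : ∀ i, K < i → S i = 0)
    (h : phi K S < 1) : DefenderWins K S :=
  defender_aux K (∑ i ∈ Finset.range (K+1), S i * (K+1-i)) S hsupp h le_rfl
end

section
/- If φ(S_0) ≥ 1 then the attacker can always win: at each turn the attacker presents a partition A, B with φ(A) ≥ 1/2 and φ(B) ≥ 1/2 (which exists by the prefix-partition theorem); whichever set the defender destroys, the surviving set, after advancing one level, has potential 2·φ(surviving set) ≥ 1, so the invariant φ(S) ≥ 1 is maintained; moreover, since the minimum level of surviving pieces never decreases and pieces advance, eventually some piece reaches level K. -/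
open Finset

/-!
Scale the potential by `2^K`: the weight `∑ S i * 2^i` is then a natural number and the
invariant reads `2^K ≤ weight`. When no piece is at level `K`, every piece weighs at most
`2^(K-1)`, so taking pieces greedily from the top levels hits the weight `2^(K-1)` exactly; this
splits the state into two parts of weight at least `2^(K-1)` each, and advancing doubles the
weight of the survivor. Pieces never move down, so after at most `K` rounds no piece is below
level `K`, and the invariant then forces one at level `K`.
-/

def weight (K : ℕ) (S : ℕ → ℕ) : ℕ := ∑ i ∈ range (K + 1), S i * 2 ^ i

theorem phi_eq_weight_div (K : ℕ) (S : ℕ → ℕ) : phi K S = weight K S / 2 ^ K := by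
  rw [phi, weight, Nat.cast_sum, sum_div]
  refine sum_congr rfl fun i _ => ?_
  rw [show -((K : ℤ) - i) = i - K by ring, zpow_sub₀ two_ne_zero, zpow_natCast, zpow_natCast]
  push_cast
  ring

theorem one_le_phi_iff (K : ℕ) (S : ℕ → ℕ) : 1 ≤ phi K S ↔ 2 ^ K ≤ weight K S := by
  rw [phi_eq_weight_div, one_le_div (by positivity)]
  exact_mod_cast Iff.rfl

theorem weight_eq_sum_range_of_apply_eq_zero {K : ℕ} {S : ℕ → ℕ} (hS : S K = 0) :
    weight K S = ∑ i ∈ range K, S i * 2 ^ i := by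
  rw [weight, sum_range_succ, hS, zero_mul, add_zero]

theorem weight_advance (K : ℕ) (A : ℕ → ℕ) :
    weight K (advance A) = 2 * ∑ i ∈ range K, A i * 2 ^ i := by
  rw [weight, sum_range_succ', mul_sum]
  simp only [advance, Nat.add_one_ne_zero, if_false, if_true, Nat.add_sub_cancel, zero_mul,
    add_zero]
  exact sum_congr rfl fun i _ => by ring

/-- Greedy: take as many items of the top weight `2^(L-1)` as fit; divisibility of the target
by `2^(L-1)` leaves a remainder divisible by the next weight, or zero. -/
theorem exists_le_sum_mul_two_pow_eq (c : ℕ → ℕ) :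
    ∀ L T, 2 ^ (L - 1) ∣ T → T ≤ ∑ i ∈ range L, c i * 2 ^ i →
      ∃ A ≤ c, ∑ i ∈ range L, A i * 2 ^ i = T := by
  intro L
  induction L with
  | zero =>
    intro T _ hT
    rw [sum_range_zero, Nat.le_zero] at hT
    exact ⟨0, fun _ => Nat.zero_le _, by rw [sum_range_zero, hT]⟩
  | succ L ih =>
    intro T hdvd hT
    rw [Nat.add_sub_cancel] at hdvd
    set a := min (c L) (T / 2 ^ L)
    have ha : a * 2 ^ L ≤ T :=
      (Nat.mul_le_mul_right _ (min_le_right _ _)).trans (Nat.div_mul_le_self _ _)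
    have hdvd' : 2 ^ (L - 1) ∣ T - a * 2 ^ L := by
      have h : 2 ^ (L - 1) ∣ 2 ^ L := pow_dvd_pow 2 (Nat.sub_le L 1)
      exact Nat.dvd_sub (h.trans hdvd) (h.mul_left a)
    have hT' : T - a * 2 ^ L ≤ ∑ i ∈ range L, c i * 2 ^ i := by
      rw [sum_range_succ] at hT
      rcases le_total (c L) (T / 2 ^ L) with h | h
      · rw [show a = c L from min_eq_left h]
        omega
      · rw [show a = T / 2 ^ L from min_eq_right h, Nat.div_mul_cancel hdvd, Nat.sub_self]
        exact Nat.zero_le _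
    obtain ⟨A, hAc, hA⟩ := ih _ hdvd' hT'
    refine ⟨Function.update A L a, fun i => ?_, ?_⟩
    · rcases eq_or_ne i L with rfl | hi
      · rw [Function.update_self]
        exact min_le_left _ _
      · rw [Function.update_of_ne hi]
        exact hAc i
    · have hlow : ∀ i ∈ range L, Function.update A L a i * 2 ^ i = A i * 2 ^ i := fun i hi => by
        rw [Function.update_of_ne (mem_range.1 hi).ne]
      rw [sum_range_succ, sum_congr rfl hlow, hA, Function.update_self]
      omega

theorem exists_partition_pow_le_weight_advance {K : ℕ} {S : ℕ → ℕ} (hSK : S K = 0)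
    (hS : 2 ^ K ≤ weight K S) :
    ∃ A B : ℕ → ℕ, (∀ i, A i + B i = S i) ∧
      2 ^ K ≤ weight K (advance A) ∧ 2 ^ K ≤ weight K (advance B) := by
  rw [weight_eq_sum_range_of_apply_eq_zero hSK] at hS
  have hK : K ≠ 0 := by
    rintro rfl
    simp at hS
  have hhalf : 2 ^ K = 2 * 2 ^ (K - 1) := by
    rw [← pow_succ', Nat.sub_add_cancel (Nat.one_le_iff_ne_zero.2 hK)]
  obtain ⟨A, hAS, hA⟩ := exists_le_sum_mul_two_pow_eq S K (2 ^ (K - 1)) dvd_rfl (by omega)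
  have hpart : ∀ i, A i + (S i - A i) = S i := fun i => Nat.add_sub_cancel' (hAS i)
  have hsum : ∑ i ∈ range K, A i * 2 ^ i + ∑ i ∈ range K, (S i - A i) * 2 ^ i
      = ∑ i ∈ range K, S i * 2 ^ i := by
    rw [← sum_add_distrib]
    exact sum_congr rfl fun i _ => by rw [← add_mul, hpart]
  refine ⟨A, S - A, hpart, ?_, ?_⟩
  · rw [weight_advance, hA, hhalf]
  · rw [weight_advance]
    change _ ≤ 2 * ∑ i ∈ range K, (S i - A i) * 2 ^ i
    omega

theorem advance_apply_eq_zero {K n : ℕ} {A : ℕ → ℕ} (hA : ∀ i, i + (n + 1) < K → A i = 0) :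
    ∀ i, i + n < K → advance A i = 0
  | 0, _ => rfl
  | i + 1, hi => hA i (by omega)

theorem attackerWins_of_pow_le_weight (K n : ℕ) :
    ∀ S : ℕ → ℕ, (∀ i, i + n < K → S i = 0) → 2 ^ K ≤ weight K S → AttackerWins K S := by
  induction n with
  | zero =>
    intro S hlow hS
    refine AttackerWins.reach S fun hSK => ?_
    rw [weight_eq_sum_range_of_apply_eq_zero hSK,
      sum_eq_zero fun i hi => by rw [hlow i (mem_range.1 hi), zero_mul]] at hS
    exact (Nat.two_pow_pos K).not_ge hS
  | succ n ih =>
    intro S hlow hS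
    by_cases hSK : S K = 0
    · obtain ⟨A, B, hpart, hA, hB⟩ := exists_partition_pow_le_weight_advance hSK hS
      refine AttackerWins.step S A B hpart (ih _ (advance_apply_eq_zero ?_) hA)
        (ih _ (advance_apply_eq_zero ?_) hB)
      all_goals
        intro i hi
        have := hpart i
        have := hlow i hi
        omega
    · exact AttackerWins.reach S hSK

theorem stmt8_general (K : ℕ) (S : ℕ → ℕ)
    (h : 1 ≤ phi K S) : AttackerWins K S :=
  attackerWins_of_pow_le_weight K K S (fun _ hi => by omega) ((one_le_phi_iff K S).1 h)

/-- If the initial potential is at least 1, the attacker can always win. -/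
theorem stmt8 (K : ℕ) (S : ℕ → ℕ) (hsupp : ∀ i, K < i → S i = 0)
    (h : 1 ≤ phi K S) : AttackerWins K S :=
  stmt8_general K S h
end

section
/- Lower bound on the number of potential-1 states: for K a power of 2, the number of (K+1)-tuples of nonnegative integers (n_0,...,n_K) with Σ n_i 2^{-(K-i)} = 1 is at least 2^{cK^2} for some constant c > 0 (e.g., c = 1/8 for large K). In particular, the count grows like 2^{Θ(K^2)}. -/
/-!
Multiplying by `2 ^ K`, a state of potential 1 becomes a partition of `2 ^ K` into the powers
`2 ^ i`, `i ≤ K`. Any counts of the parts `2, 4, …, 2 ^ K` with total at most `2 ^ K` extend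
uniquely to such a partition by filling up with parts `1`. Letting the counts of `2 ^ (i + 1)`,
`i < T`, range freely below `2 ^ T` gives `2 ^ (T * T)` choices of total at most `K * 4 ^ T`,
which fits below `2 ^ K` for `K = 4 * T`; so there are at least `2 ^ (K ^ 2 / 16)` states.
-/

open Finset

/-- `S i` is the number of parts equal to `2 ^ i`. -/
def binaryPartitions (K : ℕ) : Set (Fin (K + 1) → ℕ) :=
  {S | ∑ i, S i * 2 ^ (i : ℕ) = 2 ^ K}

theorem sum_mul_two_zpow_eq_one_iff (K : ℕ) (S : Fin (K + 1) → ℕ) :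
    ∑ i, (S i : ℝ) * (2 : ℝ) ^ (-((K : ℤ) - (i : ℕ))) = 1 ↔ S ∈ binaryPartitions K := by
  have hterm : ∀ i : Fin (K + 1),
      (S i : ℝ) * (2 : ℝ) ^ (-((K : ℤ) - (i : ℕ))) = (S i * 2 ^ (i : ℕ) : ℕ) / (2 ^ K : ℕ) := by
    intro i
    rw [neg_sub, zpow_sub₀ two_ne_zero, zpow_natCast, zpow_natCast]
    push_cast
    ring
  rw [sum_congr rfl fun i _ => hterm i, ← sum_div, div_eq_one_iff_eq (by positivity)]
  exact_mod_cast Iff.rfl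

theorem binaryPartitions_finite (K : ℕ) : (binaryPartitions K).Finite := by
  refine (Set.finite_Iic (fun _ => 2 ^ K)).subset fun S hS i => ?_
  calc S i ≤ S i * 2 ^ (i : ℕ) := Nat.le_mul_of_pos_right _ (by positivity)
    _ ≤ ∑ j, S j * 2 ^ (j : ℕ) :=
      single_le_sum (f := fun j => S j * 2 ^ (j : ℕ)) (fun j _ => Nat.zero_le _) (mem_univ i)
    _ = 2 ^ K := hS

theorem card_le_ncard_binaryPartitions (K : ℕ) (s : Finset (Fin K → ℕ))
    (hs : ∀ t ∈ s, ∑ i, t i * 2 ^ ((i : ℕ) + 1) ≤ 2 ^ K) :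
    s.card ≤ (binaryPartitions K).ncard := by
  rw [← Set.ncard_coe_finset]
  refine Set.ncard_le_ncard_of_injOn
    (fun t => Fin.cons (2 ^ K - ∑ i, t i * 2 ^ ((i : ℕ) + 1)) t) (fun t ht => ?_)
    (fun t _ t' _ h => (Fin.cons_injective2 h).2) (binaryPartitions_finite K)
  have := hs t ht
  simp only [binaryPartitions, Set.mem_ofPred_eq, Fin.sum_univ_succ, Fin.cons_zero,
    Fin.cons_succ, Fin.val_zero, Fin.val_succ, pow_zero, mul_one]
  omega

theorem two_pow_le_ncard_binaryPartitions (K T : ℕ) (hTK : T ≤ K) (hK : K * 4 ^ T ≤ 2 ^ K) :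
    2 ^ (T * T) ≤ (binaryPartitions K).ncard := by
  let box := Fintype.piFinset fun i : Fin K => if (i : ℕ) < T then range (2 ^ T) else {0}
  have hcard : box.card = 2 ^ (T * T) := by
    simp only [box, Fintype.card_piFinset, apply_ite Finset.card, card_range, card_singleton]
    rw [prod_ite, prod_const, prod_const_one, mul_one, Fin.card_filter_val_lt, min_eq_right hTK,
      ← pow_mul]
  refine hcard ▸ card_le_ncard_binaryPartitions K box fun t ht => ?_
  have hterm : ∀ i, t i * 2 ^ ((i : ℕ) + 1) ≤ 4 ^ T := by
    intro i
    have hi := Fintype.mem_piFinset.1 ht i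
    split_ifs at hi with hiT
    · calc t i * 2 ^ ((i : ℕ) + 1) ≤ 2 ^ T * 2 ^ T :=
            Nat.mul_le_mul (mem_range.1 hi).le (Nat.pow_le_pow_right two_pos hiT)
        _ = 4 ^ T := by rw [← mul_pow]; norm_num
    · simp [mem_singleton.1 hi]
  calc ∑ i, t i * 2 ^ ((i : ℕ) + 1) ≤ ∑ _i : Fin K, 4 ^ T := sum_le_sum fun i _ => hterm i
    _ = K * 4 ^ T := by simp
    _ ≤ 2 ^ K := hK

/-- Lower bound: for `K = 2^m` a large power of 2, the number of states of potential exactly 1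
is at least `2^{c K²}` for some constant `c > 0`. -/
theorem stmt12 :
    ∃ c : ℝ, 0 < c ∧ ∃ m₀ : ℕ, ∀ m : ℕ, m₀ ≤ m →
      (2:ℝ) ^ (c * ((2 ^ m : ℕ) : ℝ) ^ 2) ≤
        (({S : Fin (2 ^ m + 1) → ℕ |
            ∑ i, (S i : ℝ) * (2:ℝ) ^ (-(((2:ℤ) ^ m) - (i:ℕ))) = 1}.ncard : ℕ) : ℝ) := by
  refine ⟨1 / 16, by norm_num, 2, fun m hm => ?_⟩
  obtain ⟨k, rfl⟩ : ∃ k, m = k + 2 := ⟨m - 2, by omega⟩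
  have hK : (2 : ℤ) ^ (k + 2) = ((2 ^ (k + 2) : ℕ) : ℤ) := by push_cast; rfl
  have hexp : (1 / 16 : ℝ) * ((2 ^ (k + 2) : ℕ) : ℝ) ^ 2 = (2 ^ k * 2 ^ k : ℕ) := by
    push_cast; ring
  have hweight : 2 ^ (k + 2) * 4 ^ 2 ^ k ≤ 2 ^ 2 ^ (k + 2) := by
    have := Nat.lt_two_pow_self (n := k + 1)
    calc 2 ^ (k + 2) * 4 ^ 2 ^ k = 2 ^ (k + 2 + 2 ^ (k + 1)) := by
          rw [show 4 = 2 ^ 2 from rfl, ← pow_mul, ← pow_add, pow_succ 2 k, mul_comm 2 (2 ^ k)]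
      _ ≤ 2 ^ 2 ^ (k + 2) := Nat.pow_le_pow_right two_pos (by rw [pow_succ 2 (k + 1)]; omega)
  simp_rw [hK, sum_mul_two_zpow_eq_one_iff, Set.ofPred_mem_eq, hexp, Real.rpow_natCast]
  exact_mod_cast two_pow_le_ncard_binaryPartitions _ _
    (Nat.pow_le_pow_right two_pos (by omega)) hweight
end

section
/- If N ≥ 2^K and all N pieces start at level 0, the attacker can always win: φ(S_0) = N·2^{-K} ≥ 1, so by the potential characterization the attacker has a winning strategy; conversely if N < 2^K the defender wins. Thus with all pieces at level 0 the game value is determined exactly by the comparison of N with 2^K. -/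
open Finset

@[simp]
lemma advance_zero (S : ℕ → ℕ) : advance S 0 = 0 := rfl

@[simp]
lemma advance_succ (S : ℕ → ℕ) (i : ℕ) : advance S (i + 1) = S i := rfl

lemma attackerWins_of_pow_le_apply (K k j : ℕ) (S : ℕ → ℕ) (hjK : j + k = K)
    (hS : 2 ^ k ≤ S j) : AttackerWins K S := by
  induction k generalizing j S with
  | zero =>
    exact .reach S (by simp only [add_zero] at hjK; subst hjK; simp at hS; omega)
  | succ k ih =>
    have hhalf : 2 ^ k + 2 ^ k ≤ S j := by rw [pow_succ] at hS; omega
    let half : ℕ → ℕ := Pi.single j (2 ^ k)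
    refine .step S half (S - half) (fun i => ?_) ?_ ?_
    · by_cases hi : i = j
      · subst hi; simp only [Pi.sub_apply, half, Pi.single_eq_same]; omega
      · simp [half, hi]
    · exact ih (j + 1) _ (by omega) (by simp [half])
    · exact ih (j + 1) _ (by omega) (by simp [half]; omega)

lemma weight_add_weight {K : ℕ} {A B S : ℕ → ℕ} (hAB : ∀ i, A i + B i = S i) :
    weight K A + weight K B = weight K S := by
  simp only [weight, ← sum_add_distrib, ← add_mul, hAB]

lemma weight_advance_le (K : ℕ) (S : ℕ → ℕ) : weight K (advance S) ≤ 2 * weight K S := by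
  calc weight K (advance S) = ∑ i ∈ range K, 2 * (S i * 2 ^ i) := by
        simp only [weight, sum_range_succ', advance_succ, advance_zero, zero_mul,
          add_zero, pow_succ]
        exact sum_congr rfl fun _ _ => by ring
    _ ≤ 2 * weight K S := by
        rw [← mul_sum, weight, sum_range_succ]
        omega

lemma two_mul_weight_lighter_le {K : ℕ} {A B S : ℕ → ℕ} (hAB : ∀ i, A i + B i = S i) :
    2 * weight K (if decide (weight K A ≤ weight K B) then A else B) ≤ weight K S := by
  have := weight_add_weight (K := K) hAB
  split_ifs with h <;> simp only [decide_eq_true_eq] at h <;> omega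

lemma apply_eq_zero_of_weight_lt {K : ℕ} {S : ℕ → ℕ} (hhigh : ∀ i, K < i → S i = 0)
    (hw : weight K S < 2 ^ K) {i : ℕ} (hi : K ≤ i) : S i = 0 := by
  obtain rfl | hi := hi.eq_or_lt
  · by_contra h
    have : S K * 2 ^ K ≤ weight K S :=
      single_le_sum (f := fun i => S i * 2 ^ i) (fun _ _ => Nat.zero_le _) (self_mem_range_succ K)
    have : 2 ^ K ≤ S K * 2 ^ K := Nat.le_mul_of_pos_left _ (Nat.pos_of_ne_zero h)
    omega
  · exact hhigh i hi

lemma defenderWins_of_weight_lt (K n : ℕ) (S : ℕ → ℕ) (hlow : ∀ i, S i ≠ 0 → K ≤ i + n)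
    (hhigh : ∀ i, K < i → S i = 0) (hw : weight K S < 2 ^ K) : DefenderWins K S := by
  induction n generalizing S with
  | zero =>
    have hge : ∀ i, K ≤ i → S i = 0 := fun i => apply_eq_zero_of_weight_lt hhigh hw
    exact .empty S fun i => by_contra fun h => h (hge i (hlow i h))
  | succ n ih =>
    have hge : ∀ i, K ≤ i → S i = 0 := fun i => apply_eq_zero_of_weight_lt hhigh hw
    refine .step S (fun A B => decide (weight K A ≤ weight K B)) (hge K le_rfl) fun A B hAB => ?_
    have hC : ∀ i, S i = 0 → (if decide (weight K A ≤ weight K B) then A else B) i = 0 :=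
      fun i hi => by have := hAB i; split_ifs <;> omega
    refine ih _ (fun i hi => ?_) (fun i hi => ?_) ?_
    · obtain _ | i := i
      · exact absurd rfl hi
      · have := hlow i fun h => hi (hC i h)
        omega
    · obtain _ | i := i
      · omega
      · simpa using hC i (hge i (by omega))
    · calc _ ≤ 2 * weight K _ := weight_advance_le K _
        _ ≤ weight K S := two_mul_weight_lighter_le hAB
        _ < 2 ^ K := hw

lemma weight_eq_apply_zero (K : ℕ) {S : ℕ → ℕ} (hrest : ∀ i, i ≠ 0 → S i = 0) :
    weight K S = S 0 := by
  rw [weight, sum_eq_single_of_mem 0 (by simp) fun i _ hi => by simp [hrest i hi]]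
  simp

/-- With all `N` pieces at level 0 the game value is determined by comparing `N` with `2^K`:
the attacker wins iff `N ≥ 2^K`, the defender wins iff `N < 2^K`. -/
theorem stmt17 (K N : ℕ) (S : ℕ → ℕ) (h0 : S 0 = N) (hrest : ∀ i, i ≠ 0 → S i = 0) :
    (2 ^ K ≤ N → AttackerWins K S) ∧ (N < 2 ^ K → DefenderWins K S) := by
  refine ⟨fun hN => attackerWins_of_pow_le_apply K K 0 S (zero_add K) (h0 ▸ hN), fun hN => ?_⟩
  exact defenderWins_of_weight_lt K K S (fun i _ => Nat.le_add_left K i)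
    (fun i hi => hrest i (by omega)) (weight_eq_apply_zero K hrest ▸ h0 ▸ hN)
end
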